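/- arXiv:2601.19101 — 3 statements merged into one kernel-verified Lean document; each statement's English description precedes it below -/
import Mathlib

section
/- Assume β01 > 0, π0 > 0 and δ0 ≥ 0. Then there exist no real numbers S, R, D and I0 > 0 such that the point (S, I0, 0, R, D) is an equilibrium of the macroscopic system; that is, there is no no-mutant equilibrium when the cross-transmission rate β01 is positive and the master recovery rate π0 is positive. (Indeed, the I1-equation forces β01·I0·S = 0, hence S = 0, and then the I0-equation forces (π0 + δ0)·I0 = 0, a contradiction.) -/
/-- Non-existence of no-mutant equilibria when the
cross-transmission rate `β01` and the master recovery rate `π0` are positive: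
no point `(S, I0, 0, R, D)` with `I0 > 0` is an equilibrium of the macroscopic
system. -/
theorem no_NmutE_when_beta01_pos
    (β00 β01 β11 π0 π1 δ0 δ1 χ : ℝ)
    (hβ00 : 0 ≤ β00) (hβ01 : 0 < β01) (hβ11 : 0 ≤ β11)
    (hπ0 : 0 < π0) (hπ1 : 0 ≤ π1) (hδ0 : 0 ≤ δ0) (hδ1 : 0 ≤ δ1) (hχ : 0 ≤ χ) :
    ¬ ∃ (S R D I0 : ℝ), 0 < I0 ∧
      (-(β00 * I0 + β01 * I0 + β11 * 0) * S + χ * R = 0 ∧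
       β00 * I0 * S - (π0 + δ0) * I0 = 0 ∧
       (β01 * I0 + β11 * 0) * S - (π1 + δ1) * 0 = 0 ∧
       π0 * I0 + π1 * 0 - χ * R = 0 ∧
       δ0 * I0 + δ1 * 0 = 0) := by
  rintro ⟨S, R, D, I0, hI0, -, h2, h3, -, -⟩
  have hS : S = 0 := by
    have : β01 * I0 * S = 0 := by nlinarith
    rcases mul_eq_zero.mp this with h | h
    · exact absurd h (by positivity)
    · exact h
  subst hS
  nlinarith
end

section
/- Let (S, I0, I1, R, D) be an equilibrium of the macroscopic system with I0 > 0 and I1 > 0, and assume δ0, δ1 ≥ 0, χ > 0, β00 > 0, β01 > 0, β11 ≥ 0 and π0 > 0. Then necessarily δ0 = δ1 = 0, S = π0/β00, the inequality β00·π1 > β11·π0 holds, and moreover I1 = (β01·π0/(β00·π1 − β11·π0))·I0 and R = (π0·I0 + π1·I1)/χ. -/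
/-! The death equation is a sum of nonnegative terms, so both death rates vanish. The `I0`
equation then pins `S = π0 / β00`, and substituting this into the `I1` equation gives the linear
relation `β01 π0 I0 = (β00 π1 - β11 π0) I1`; its left side is positive, which forces the sign of
`β00 π1 - β11 π0` and determines `I1`. Finally `R` is read off the `R` equation. -/

lemma eq_zero_and_eq_zero_of_mul_add_mul_eq_zero {α : Type*} [Ring α] [LinearOrder α]
    [IsStrictOrderedRing α] {a b x y : α} (ha : 0 ≤ a) (hb : 0 ≤ b) (hx : 0 < x) (hy : 0 < y)
    (h : a * x + b * y = 0) : a = 0 ∧ b = 0 := by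
  obtain ⟨hax, hby⟩ :=
    (add_eq_zero_iff_of_nonneg (mul_nonneg ha hx.le) (mul_nonneg hb hy.le)).1 h
  exact ⟨(mul_eq_zero.1 hax).resolve_right hx.ne', (mul_eq_zero.1 hby).resolve_right hy.ne'⟩

lemma second_strain_balance {α : Type*} [CommRing α] {β00 β01 β11 π0 π1 S I0 I1 : α}
    (hS : β00 * S = π0) (h : (β01 * I0 + β11 * I1) * S = π1 * I1) :
    β01 * π0 * I0 = (β00 * π1 - β11 * π0) * I1 := by
  linear_combination β00 * h - (β01 * I0 + β11 * I1) * hS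

theorem cocirculating_equilibrium_general
    (β00 β01 β11 π0 π1 δ0 δ1 χ : ℝ) (S I0 I1 R : ℝ)
    (hδ0 : 0 ≤ δ0) (hδ1 : 0 ≤ δ1) (hχ : 0 < χ)
    (hβ00 : 0 < β00) (hβ01 : 0 < β01) (hπ0 : 0 < π0)
    (hI0 : 0 < I0) (hI1 : 0 < I1)
    (e2 : β00 * I0 * S - (π0 + δ0) * I0 = 0)
    (e3 : (β01 * I0 + β11 * I1) * S - (π1 + δ1) * I1 = 0)
    (e4 : π0 * I0 + π1 * I1 - χ * R = 0)
    (e5 : δ0 * I0 + δ1 * I1 = 0) :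
    δ0 = 0 ∧ δ1 = 0 ∧ S = π0 / β00 ∧ β00 * π1 > β11 * π0 ∧
    I1 = (β01 * π0 / (β00 * π1 - β11 * π0)) * I0 ∧
    R = (π0 * I0 + π1 * I1) / χ := by
  obtain ⟨rfl, rfl⟩ := eq_zero_and_eq_zero_of_mul_add_mul_eq_zero hδ0 hδ1 hI0 hI1 e5
  have hS : β00 * S = π0 := mul_left_cancel₀ hI0.ne' (by linear_combination e2)
  have hbalance : β01 * π0 * I0 = (β00 * π1 - β11 * π0) * I1 :=
    second_strain_balance hS (by linear_combination e3)
  have hgap : 0 < β00 * π1 - β11 * π0 :=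
    pos_of_mul_pos_left (hbalance ▸ by positivity) hI1.le
  refine ⟨rfl, rfl, eq_div_of_mul_eq hβ00.ne' (by linarith), by linarith, ?_,
    eq_div_of_mul_eq hχ.ne' (by linarith)⟩
  rw [div_mul_eq_mul_div, eq_div_iff hgap.ne', hbalance, mul_comm]

/-- At a co-circulating strains equilibrium (`I0 > 0`, `I1 > 0`)
with `χ > 0`, `β00 > 0`, `β01 > 0`, `β11 ≥ 0`, `π0 > 0` and `δ0, δ1 ≥ 0`, one
necessarily has `δ0 = δ1 = 0`, `S = π0/β00`, `β00·π1 > β11·π0`,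
`I1 = (β01·π0/(β00·π1 − β11·π0))·I0` and `R = (π0·I0 + π1·I1)/χ`. -/
theorem cocirculating_equilibrium
    (β00 β01 β11 π0 π1 δ0 δ1 χ : ℝ) (S I0 I1 R D : ℝ)
    (hδ0 : 0 ≤ δ0) (hδ1 : 0 ≤ δ1) (hχ : 0 < χ)
    (hβ00 : 0 < β00) (hβ01 : 0 < β01) (hβ11 : 0 ≤ β11) (hπ0 : 0 < π0)
    (hI0 : 0 < I0) (hI1 : 0 < I1)
    (e1 : -(β00 * I0 + β01 * I0 + β11 * I1) * S + χ * R = 0)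
    (e2 : β00 * I0 * S - (π0 + δ0) * I0 = 0)
    (e3 : (β01 * I0 + β11 * I1) * S - (π1 + δ1) * I1 = 0)
    (e4 : π0 * I0 + π1 * I1 - χ * R = 0)
    (e5 : δ0 * I0 + δ1 * I1 = 0) :
    δ0 = 0 ∧ δ1 = 0 ∧ S = π0 / β00 ∧ β00 * π1 > β11 * π0 ∧
    I1 = (β01 * π0 / (β00 * π1 - β11 * π0)) * I0 ∧
    R = (π0 * I0 + π1 * I1) / χ :=
  cocirculating_equilibrium_general β00 β01 β11 π0 π1 δ0 δ1 χ S I0 I1 R hδ0 hδ1 hχ hβ00 hβ01 hπ0 hI0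
    hI1 e2 e3 e4 e5
end

section
/- Define Δ(π1) = 49·π1³ − 84·π1² − 924·π1 + 338. Then for every real π1 one has the polynomial factorization 49·π1³ − 84·π1² − 924·π1 − 1120 = 7·(7·π1 − 40)·(π1 + 2)², and hence Δ(π1) < 1458 for all 0 < π1 < 40/7. Consequently, for every π1 ∈ (0, 40/7) with Δ(π1) ≥ 0, one has √(2·Δ(π1)) < 54, so that both eigenvalues λ± = (−54 ± √(2·Δ(π1)))/(7·(π1 + 2)) are strictly negative. -/
/-- The discriminant appearing in the NME eigenvalue analysis. -/
noncomputable def Δ (π1 : ℝ) : ℝ := 49 * π1 ^ 3 - 84 * π1 ^ 2 - 924 * π1 + 338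

/-- Polynomial factorization, the bound `Δ(π1) < 1458` on
`(0, 40/7)`, and negativity of both NME eigenvalues
`λ± = (−54 ± √(2·Δ(π1)))/(7·(π1 + 2))` when `Δ(π1) ≥ 0`. -/
theorem NME_eigenvalues_negative (π1 : ℝ) :
    (49 * π1 ^ 3 - 84 * π1 ^ 2 - 924 * π1 - 1120 =
      7 * (7 * π1 - 40) * (π1 + 2) ^ 2) ∧
    (0 < π1 → π1 < 40 / 7 →
      (Δ π1 < 1458 ∧
       (0 ≤ Δ π1 →
         Real.sqrt (2 * Δ π1) < 54 ∧
         (-54 + Real.sqrt (2 * Δ π1)) / (7 * (π1 + 2)) < 0 ∧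
         (-54 - Real.sqrt (2 * Δ π1)) / (7 * (π1 + 2)) < 0))) := by
  refine ⟨by ring, fun h0 h40 => ?_⟩
  have hΔ : Δ π1 < 1458 := by
    unfold Δ
    have hsq : (0:ℝ) < (π1 + 2) ^ 2 := by positivity
    nlinarith [mul_pos (by linarith : (0:ℝ) < 40 - 7 * π1) hsq]
  refine ⟨hΔ, fun hnn => ?_⟩
  have hs : Real.sqrt (2 * Δ π1) < 54 := by
    have : Real.sqrt (2 * Δ π1) < Real.sqrt (54^2) := by
      apply Real.sqrt_lt_sqrt (by linarith)
      norm_num; linarith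
    simpa [Real.sqrt_sq] using this
  have hden : (0:ℝ) < 7 * (π1 + 2) := by linarith
  have hsnn : 0 ≤ Real.sqrt (2 * Δ π1) := Real.sqrt_nonneg _
  exact ⟨hs, div_neg_of_neg_of_pos (by linarith) hden,
    div_neg_of_neg_of_pos (by linarith) hden⟩
end
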